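/- (Theorem 5: optimal contest with group-specific prizes only.) Let n ≥ 2, μ ∈ (0,1], let F : [0,1] → [0,1] be continuously differentiable, strictly increasing, with F(0) = 0, F(1) = 1, and derivative f. Set H(y) = (1−μ) + μF(y) and f^H_{n−1,j}(y) = ((n−1)!/((j−1)!(n−1−j)!)) H(y)^{n−1−j} (1−H(y))^{j−1} μ f(y). For a prize vector ω = (ω_1, …, ω_n) with ω_1 ≥ … ≥ ω_n ≥ 0 and Σ_j ω_j ≤ 1, define the equilibrium target-group strategy α_ω(v) = Σ_{j=1}^{n−1} (ω_j − ω_{j+1}) ∫_0^v y f^H_{n−1,j}(y) dy and the designer objective J(ω) = ∫_0^1 α_ω(v) f(v) dv. Then the prize vector ω* = (1, 0, …, 0) satisfies J(ω*) ≥ J(ω) for every feasible prize vector ω. -/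

import Mathlib

open scoped Nat

/-- Density of the `j`-th highest order statistic out of `m` i.i.d. samples from `H`. -/
noncomputable def orderDensity (H h : ℝ → ℝ) (m j : ℕ) (y : ℝ) : ℝ :=
  ((m ! : ℝ) / (((j-1)! : ℝ) * ((m-j)! : ℝ))) * (H y)^(m-j) * (1 - H y)^(j-1) * h y

/-- Equilibrium strategy `α_ω(v) = Σ_{j=1}^{n−1} (ω_j − ω_{j+1}) ∫_0^v y f^H_{n−1,j}(y) dy`. -/
noncomputable def eqStrategy (H h : ℝ → ℝ) (n : ℕ) (ω : ℕ → ℝ) (v : ℝ) : ℝ :=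
  ∑ j ∈ Finset.Icc 1 (n-1), (ω j - ω (j+1)) * ∫ y in (0:ℝ)..v, y * orderDensity H h (n-1) j y

/-- Designer objective: expected equilibrium output of a target-group agent,
`J(ω) = ∫_0^1 α_ω(v) f(v) dv`. -/
noncomputable def designerObj (H h f : ℝ → ℝ) (n : ℕ) (ω : ℕ → ℝ) : ℝ :=
  ∫ v in (0:ℝ)..1, eqStrategy H h n ω v * f v


/-!
Let `H = 1 - μ + μ F` and `h = μ f`, and write `m = n - 1`. The identity
`f^H_{m,j} (1 - H) = j B_{m,m-j}(H) h` for the Bernstein polynomials `B_{m,i}`, together with an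
integration by parts in `v`, gives `μ J(ω) = Σ_j (ω_j - ω_{j+1}) j M_{m-j}`, where
`M_i = ∫₀¹ y B_{m,i}(H y) h y dy` is, up to the factor `1/(m+1)`, the mean of the
`(i+1)`-th lowest of `m + 1` draws from `H`. A second integration by parts, against the
nonnegative tail `Σ_{i<l≤k} B_{m+1,l}(H)` that vanishes at `y = 1`, shows `M_i ≤ M_k` for
`i ≤ k ≤ m` (first-order stochastic dominance). Hence
`μ J(ω) ≤ (Σ_j j (ω_j - ω_{j+1})) M_{m-1} ≤ M_{m-1}`, and `(1, 0, …, 0)` attains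
`μ J = M_{m-1}`.
-/

open Set MeasureTheory Polynomial

namespace bernsteinPolynomial

variable {R : Type*} [CommRing R]

lemma derivative_sum_Ioc (m i k : ℕ) (hik : i ≤ k) :
    derivative (∑ l ∈ Finset.Ioc i k, bernsteinPolynomial R (m + 1) l) =
      (m + 1 : R[X]) * (bernsteinPolynomial R m i - bernsteinPolynomial R m k) := by
  induction k, hik using Nat.le_induction with
  | base => simp
  | succ k hik ih =>
    rw [Finset.sum_Ioc_succ_top hik, derivative_add, ih, derivative_succ, Nat.add_sub_cancel]
    push_cast
    ring

lemma eval_sum_Ioc_one {m i k : ℕ} (hkm : k ≤ m) :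
    (∑ l ∈ Finset.Ioc i k, bernsteinPolynomial R (m + 1) l).eval 1 = 0 := by
  rw [eval_finsetSum]
  refine Finset.sum_eq_zero fun l hl => ?_
  rw [eval_at_1, if_neg (by grind)]

lemma eval_nonneg (n ν : ℕ) {t : ℝ} (ht : t ∈ Icc (0 : ℝ) 1) :
    0 ≤ (bernsteinPolynomial ℝ n ν).eval t :=
  bernstein_nonneg (x := ⟨t, ht⟩)

end bernsteinPolynomial

lemma integral_mul_deriv_comp_nonpos {G g H h : ℝ → ℝ}
    (hG : ∀ t, HasDerivAt G (g t) t) (hg : Continuous g) (hH : ContinuousOn H (Icc 0 1))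
    (hHd : ∀ y ∈ Ioo (0 : ℝ) 1, HasDerivAt H (h y) y) (hh : ContinuousOn h (Icc 0 1))
    (hGH : ∀ y ∈ Icc (0 : ℝ) 1, 0 ≤ G (H y)) (hG1 : G (H 1) = 0) :
    ∫ y in (0 : ℝ)..1, y * (g (H y) * h y) ≤ 0 := by
  have hGc : Continuous G := continuous_iff_continuousAt.2 fun t => (hG t).continuousAt
  rw [← uIcc_of_le zero_le_one] at hH hh
  have ibp := intervalIntegral.integral_mul_deriv_eq_deriv_mul_of_hasDerivAt (u := id)
    (u' := fun _ => 1) (v := G ∘ H) (v' := fun y => g (H y) * h y) continuousOn_id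
    (hGc.comp_continuousOn hH) (fun x _ => hasDerivAt_id x)
    (fun x hx => (hG (H x)).comp x (hHd x (by simpa using hx))) intervalIntegrable_const
    ((hg.comp_continuousOn hH).mul hh).intervalIntegrable
  simp only [id, Function.comp, one_mul, hG1, zero_mul, mul_zero, zero_sub, sub_zero] at ibp
  rw [ibp, neg_nonpos]
  exact intervalIntegral.integral_nonneg zero_le_one hGH

lemma integral_primitive_mul_deriv_eq {g F f : ℝ → ℝ} (hg : ContinuousOn g (Icc 0 1))
    (hF : ∀ v ∈ Icc (0 : ℝ) 1, HasDerivWithinAt F (f v) (Icc 0 1) v)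
    (hf : ContinuousOn f (Icc 0 1)) :
    ∫ v in (0 : ℝ)..1, (∫ y in (0 : ℝ)..v, g y) * f v
      = ∫ y in (0 : ℝ)..1, g y * (F 1 - F y) := by
  have hFc : ContinuousOn F (Icc 0 1) := fun v hv => (hF v hv).continuousWithinAt
  have hgi : IntegrableOn g (uIcc 0 1) := by
    rw [uIcc_of_le zero_le_one]; exact hg.integrableOn_Icc
  have hprim :
      ∀ x ∈ Ioo (0 : ℝ) 1, HasDerivAt (fun v => ∫ y in (0 : ℝ)..v, g y) (g x) x :=
    fun x hx => intervalIntegral.integral_hasDerivAt_right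
      (hg.mono (uIcc_subset_Icc (left_mem_Icc.2 zero_le_one)
        (Ioo_subset_Icc_self hx))).intervalIntegrable
      ((hg.mono Ioo_subset_Icc_self).stronglyMeasurableAtFilter isOpen_Ioo x hx)
      (hg.continuousAt (Icc_mem_nhds hx.1 hx.2))
  rw [← uIcc_of_le zero_le_one] at hg hf hFc
  have ibp := intervalIntegral.integral_mul_deriv_eq_deriv_mul_of_hasDerivAt
    (intervalIntegral.continuousOn_primitive_interval hgi) hFc
    (fun x hx => hprim x (by simpa using hx))
    (fun x hx => (hF x (Ioo_subset_Icc_self (by simpa using hx))).hasDerivAt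
      (Icc_mem_nhds (by simpa using hx.1) (by simpa using hx.2)))
    hg.intervalIntegrable hf.intervalIntegrable
  rw [ibp, intervalIntegral.integral_same, zero_mul, sub_zero,
    ← intervalIntegral.integral_mul_const, ← intervalIntegral.integral_sub]
  · simp only [mul_sub]
  · exact (hg.mul continuousOn_const).intervalIntegrable
  · exact (hg.mul hFc).intervalIntegrable

noncomputable def bernsteinMoment (H h : ℝ → ℝ) (m i : ℕ) : ℝ :=
  ∫ y in (0 : ℝ)..1, y * ((bernsteinPolynomial ℝ m i).eval (H y) * h y)

section BernsteinMoment

variable {H h : ℝ → ℝ}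

lemma bernsteinMoment_nonneg (hH : MapsTo H (Icc 0 1) (Icc 0 1))
    (hh : ∀ y ∈ Icc (0 : ℝ) 1, 0 ≤ h y) (m i : ℕ) : 0 ≤ bernsteinMoment H h m i :=
  intervalIntegral.integral_nonneg zero_le_one fun y hy =>
    mul_nonneg hy.1 (mul_nonneg (bernsteinPolynomial.eval_nonneg m i (hH hy)) (hh y hy))

lemma bernsteinMoment_mono (hH : ContinuousOn H (Icc 0 1))
    (hHd : ∀ y ∈ Ioo (0 : ℝ) 1, HasDerivAt H (h y) y) (hh : ContinuousOn h (Icc 0 1))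
    (hH01 : MapsTo H (Icc 0 1) (Icc 0 1)) (hH1 : H 1 = 1) {m i k : ℕ} (hik : i ≤ k)
    (hkm : k ≤ m) : bernsteinMoment H h m i ≤ bernsteinMoment H h m k := by
  set T := ∑ l ∈ Finset.Ioc i k, bernsteinPolynomial ℝ (m + 1) l
  have hibp := integral_mul_deriv_comp_nonpos (G := fun t => T.eval t)
    (fun t => T.hasDerivAt t) T.derivative.continuous hH hHd hh
    (fun y hy => by
      rw [eval_finsetSum]
      exact Finset.sum_nonneg fun l _ => bernsteinPolynomial.eval_nonneg _ _ (hH01 hy))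
    (by rw [hH1]; exact bernsteinPolynomial.eval_sum_Ioc_one hkm)
  have hint : ∀ j, IntervalIntegrable
      (fun y => y * ((bernsteinPolynomial ℝ m j).eval (H y) * h y)) volume 0 1 := fun j =>
    (continuousOn_id.mul (((bernsteinPolynomial ℝ m j).continuous.comp_continuousOn hH).mul
      hh)).intervalIntegrable_of_Icc zero_le_one
  have hsplit : ∫ y in (0 : ℝ)..1, y * (T.derivative.eval (H y) * h y)
      = (m + 1) * (bernsteinMoment H h m i - bernsteinMoment H h m k) := by
    rw [bernsteinMoment, bernsteinMoment, ← intervalIntegral.integral_sub (hint i) (hint k),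
      ← intervalIntegral.integral_const_mul, bernsteinPolynomial.derivative_sum_Ioc m i k hik]
    congr 1 with y
    simp only [eval_mul, eval_sub, eval_add, eval_natCast, eval_one]
    ring
  rw [hsplit] at hibp
  exact sub_nonpos.1 (nonpos_of_mul_nonpos_right hibp (by positivity))

end BernsteinMoment

lemma continuousOn_orderDensity {H h : ℝ → ℝ} {s : Set ℝ} (hH : ContinuousOn H s)
    (hh : ContinuousOn h s) (m j : ℕ) : ContinuousOn (orderDensity H h m j) s := by
  unfold orderDensity
  fun_prop

lemma orderDensity_mul_one_sub (H h : ℝ → ℝ) {m j : ℕ} (hj : 1 ≤ j) (hjm : j ≤ m)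
    (y : ℝ) :
    orderDensity H h m j y * (1 - H y)
      = j * ((bernsteinPolynomial ℝ m (m - j)).eval (H y) * h y) := by
  obtain ⟨k, rfl⟩ : ∃ k, j = k + 1 := ⟨j - 1, by omega⟩
  have hfact := Nat.choose_mul_factorial_mul_factorial hjm
  rw [Nat.factorial_succ] at hfact
  simp only [orderDensity, bernsteinPolynomial, eval_mul, eval_pow, eval_sub, eval_one, eval_X,
    eval_natCast, Nat.choose_symm hjm, Nat.sub_sub_self hjm, Nat.add_sub_cancel]
  rw [← hfact]
  push_cast
  field_simp
  ring

lemma designerObj_eq_sum {H h F f : ℝ → ℝ} (hH : ContinuousOn H (Icc 0 1))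
    (hh : ContinuousOn h (Icc 0 1))
    (hF : ∀ v ∈ Icc (0 : ℝ) 1, HasDerivWithinAt F (f v) (Icc 0 1) v)
    (hf : ContinuousOn f (Icc 0 1)) (n : ℕ) (ω : ℕ → ℝ) :
    designerObj H h f n ω = ∑ j ∈ Finset.Icc 1 (n - 1), (ω j - ω (j + 1)) *
      ∫ y in (0 : ℝ)..1, y * orderDensity H h (n - 1) j y * (F 1 - F y) := by
  have hg : ∀ j, ContinuousOn (fun y => y * orderDensity H h (n - 1) j y) (Icc 0 1) :=
    fun j => continuousOn_id.mul (continuousOn_orderDensity hH hh _ j)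
  simp only [designerObj, eqStrategy, Finset.sum_mul, mul_assoc]
  rw [intervalIntegral.integral_finsetSum]
  · refine Finset.sum_congr rfl fun j _ => ?_
    rw [intervalIntegral.integral_const_mul, integral_primitive_mul_deriv_eq (hg j) hF hf]
    simp only [mul_assoc]
  · intro j _
    have hgi : IntegrableOn (fun y => y * orderDensity H h (n - 1) j y) (uIcc 0 1) := by
      rw [uIcc_of_le zero_le_one]; exact (hg j).integrableOn_Icc
    refine (((intervalIntegral.continuousOn_primitive_interval hgi).mul ?_).const_mul
      _).intervalIntegrable
    rwa [uIcc_of_le zero_le_one]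

lemma mul_designerObj_eq {μ : ℝ} {F f : ℝ → ℝ}
    (hF : ∀ v ∈ Icc (0 : ℝ) 1, HasDerivWithinAt F (f v) (Icc 0 1) v) (hF1 : F 1 = 1)
    (hf : ContinuousOn f (Icc 0 1)) (n : ℕ) (ω : ℕ → ℝ) :
    μ * designerObj (fun y => (1 - μ) + μ * F y) (fun y => μ * f y) f n ω
      = ∑ j ∈ Finset.Icc 1 (n - 1), (ω j - ω (j + 1)) * (j * bernsteinMoment
          (fun y => (1 - μ) + μ * F y) (fun y => μ * f y) (n - 1) (n - 1 - j)) := by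
  have hFc : ContinuousOn F (Icc 0 1) := fun v hv => (hF v hv).continuousWithinAt
  rw [designerObj_eq_sum (by fun_prop) (by fun_prop) hF hf, Finset.mul_sum]
  refine Finset.sum_congr rfl fun j hj => ?_
  obtain ⟨hj1, hjn⟩ := Finset.mem_Icc.1 hj
  rw [mul_left_comm]
  congr 1
  rw [bernsteinMoment, ← intervalIntegral.integral_const_mul,
    ← intervalIntegral.integral_const_mul]
  refine intervalIntegral.integral_congr fun y _ => ?_
  have hcomp :=
    orderDensity_mul_one_sub (fun y => (1 - μ) + μ * F y) (fun y => μ * f y) hj1 hjn y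
  rw [hF1]
  linear_combination y * hcomp

lemma mul_designerObj_winnerTakeAll {μ : ℝ} {F f : ℝ → ℝ}
    (hF : ∀ v ∈ Icc (0 : ℝ) 1, HasDerivWithinAt F (f v) (Icc 0 1) v) (hF1 : F 1 = 1)
    (hf : ContinuousOn f (Icc 0 1)) {n : ℕ} (hn : 2 ≤ n) :
    μ * designerObj (fun y => (1 - μ) + μ * F y) (fun y => μ * f y) f n
        (fun j => if j = 1 then 1 else 0)
      = bernsteinMoment (fun y => (1 - μ) + μ * F y) (fun y => μ * f y) (n - 1) (n - 1 - 1) := by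
  rw [mul_designerObj_eq hF hF1 hf, Finset.sum_eq_single_of_mem 1
    (Finset.mem_Icc.2 ⟨le_rfl, by omega⟩)
    fun j hj hj1 => by simp [hj1, Nat.one_le_iff_ne_zero.1 (Finset.mem_Icc.1 hj).1]]
  simp

lemma sum_Icc_mul_sub_succ (ω : ℕ → ℝ) (m : ℕ) :
    ∑ j ∈ Finset.Icc 1 m, (j : ℝ) * (ω j - ω (j + 1))
      = ∑ j ∈ Finset.Icc 1 m, ω j - m * ω (m + 1) := by
  induction m with
  | zero => simp
  | succ m ih =>
    rw [Finset.sum_Icc_succ_top (by omega), Finset.sum_Icc_succ_top (by omega), ih]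
    push_cast
    ring

lemma sum_Icc_sub_mul_le {n : ℕ} {ω a : ℕ → ℝ} {A : ℝ}
    (hω : ∀ j, 1 ≤ j → j < n → ω (j + 1) ≤ ω j) (hωn : 0 ≤ ω n)
    (hsum : ∑ j ∈ Finset.Icc 1 n, ω j ≤ 1)
    (ha : ∀ j ∈ Finset.Icc 1 (n - 1), a j ≤ j * A) (hA : 0 ≤ A) :
    ∑ j ∈ Finset.Icc 1 (n - 1), (ω j - ω (j + 1)) * a j ≤ A := by
  have hweights : ∑ j ∈ Finset.Icc 1 (n - 1), (j : ℝ) * (ω j - ω (j + 1)) ≤ 1 := by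
    cases n with
    | zero => simp
    | succ m =>
      rw [Nat.add_sub_cancel, sum_Icc_mul_sub_succ]
      rw [Finset.sum_Icc_succ_top (by omega)] at hsum
      nlinarith [m.cast_nonneg (α := ℝ)]
  calc ∑ j ∈ Finset.Icc 1 (n - 1), (ω j - ω (j + 1)) * a j
      ≤ ∑ j ∈ Finset.Icc 1 (n - 1), (ω j - ω (j + 1)) * (j * A) := by
        refine Finset.sum_le_sum fun j hj => mul_le_mul_of_nonneg_left (ha j hj) ?_
        have := Finset.mem_Icc.1 hj
        exact sub_nonneg.2 (hω j this.1 (by omega))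
    _ = (∑ j ∈ Finset.Icc 1 (n - 1), (j : ℝ) * (ω j - ω (j + 1))) * A := by
        rw [Finset.sum_mul]
        exact Finset.sum_congr rfl fun j _ => by ring
    _ ≤ A := mul_le_of_le_one_left hA hweights

/-- Theorem 5: in a contest with target group-specific prizes only, with
effective competitor ability distribution `H(y) = (1−μ) + μF(y)`, the prize vector `(1,0,…,0)`
maximizes the expected target-group output over all feasible prize vectors
`ω_1 ≥ … ≥ ω_n ≥ 0` with `Σ_j ω_j ≤ 1`. -/
theorem optimal_group_specific_contest (n : ℕ) (hn : 2 ≤ n)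
    (μ : ℝ) (hμ : μ ∈ Set.Ioc (0:ℝ) 1) (F f : ℝ → ℝ)
    (hmono : StrictMonoOn F (Set.Icc (0:ℝ) 1))
    (hF0 : F 0 = 0) (hF1 : F 1 = 1)
    (hderiv : ∀ v ∈ Set.Icc (0:ℝ) 1, HasDerivWithinAt F (f v) (Set.Icc (0:ℝ) 1) v)
    (hcont : ContinuousOn f (Set.Icc (0:ℝ) 1)) :
    ∀ ω : ℕ → ℝ,
      (∀ j, 1 ≤ j → j < n → ω (j+1) ≤ ω j) → 0 ≤ ω n →
      (∑ j ∈ Finset.Icc 1 n, ω j) ≤ 1 →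
      designerObj (fun y => (1-μ) + μ * F y) (fun y => μ * f y) f n ω
        ≤ designerObj (fun y => (1-μ) + μ * F y) (fun y => μ * f y) f n
            (fun j => if j = 1 then 1 else 0) := by
  intro ω hω hωn hsum
  have hFc : ContinuousOn F (Icc 0 1) := fun v hv => (hderiv v hv).continuousWithinAt
  have hFmaps : MapsTo F (Icc 0 1) (Icc 0 1) := fun y hy =>
    ⟨hF0 ▸ hmono.monotoneOn (left_mem_Icc.2 zero_le_one) hy hy.1,
      hF1 ▸ hmono.monotoneOn hy (right_mem_Icc.2 zero_le_one) hy.2⟩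
  have hHmaps : MapsTo (fun y => (1 - μ) + μ * F y) (Icc 0 1) (Icc 0 1) := fun y hy => by
    have := hFmaps hy
    constructor <;> nlinarith [hμ.1, hμ.2, this.1, this.2]
  have hf0 : ∀ y ∈ Icc (0 : ℝ) 1, 0 ≤ f y := fun y hy => (hderiv y hy).nonneg_of_monotoneOn
    (uniqueDiffWithinAt_iff_accPt.1 (uniqueDiffOn_Icc zero_lt_one y hy)) hmono.monotoneOn
  have hHd : ∀ y ∈ Ioo (0 : ℝ) 1, HasDerivAt (fun y => (1 - μ) + μ * F y) (μ * f y) y :=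
    fun y hy => (((hderiv y (Ioo_subset_Icc_self hy)).hasDerivAt
      (Icc_mem_nhds hy.1 hy.2)).const_mul μ).const_add (1 - μ)
  refine le_of_mul_le_mul_left ?_ hμ.1
  rw [mul_designerObj_eq hderiv hF1 hcont, mul_designerObj_winnerTakeAll hderiv hF1 hcont hn]
  exact sum_Icc_sub_mul_le hω hωn hsum
    (fun j hj => mul_le_mul_of_nonneg_left (bernsteinMoment_mono (by fun_prop) hHd (by fun_prop)
      hHmaps (by simp [hF1]) (Nat.sub_le_sub_left (Finset.mem_Icc.1 hj).1 _)
      (Nat.sub_le _ _)) j.cast_nonneg)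
    (bernsteinMoment_nonneg hHmaps (fun y hy => mul_nonneg hμ.1.le (hf0 y hy)) _ _)
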